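/- Let G be a graph with an ordering σ of width r. Then there exists an ordering τ of V(G) of optimum width, i.e., with cw_τ(G) = cw(G), such that for every prefix X of σ (a set of the form V_v^σ for v ∈ V(G)), the number of X-blocks in τ is at most 2r·cw(G) + cw(G) + 4r + 2. -/

import Mathlib

/-- A finite undirected multigraph without loops. -/
structure Multigraph where
  V : Type
  E : Type
  finV : Finite V
  finE : Finite E
  ends : E → V × V
  loopless : ∀ e, (ends e).1 ≠ (ends e).2

attribute [instance] Multigraph.finV Multigraph.finE

namespace Multigraph

/-- `δ_G(S)`: the number of edges of `G` with exactly one endpoint in `S`. -/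
noncomputable def delta (G : Multigraph) (S : Set G.V) : ℕ :=
  {e : G.E | ¬ ((G.ends e).1 ∈ S ↔ (G.ends e).2 ∈ S)}.ncard

/-- The width `cw_σ(G)` of an ordering, represented as an injective ranking `ρ : V → ℕ`. -/
noncomputable def cwOrd (G : Multigraph) (ρ : G.V → ℕ) : ℕ :=
  sSup {w | ∃ v : G.V, w = G.delta {u | ρ u ≤ ρ v}}

/-- The cutwidth of a multigraph. -/
noncomputable def cutwidth (G : Multigraph) : ℕ :=
  sInf {w | ∃ ρ : G.V → ℕ, Function.Injective ρ ∧ G.cwOrd ρ = w}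

/-- Walks in a multigraph. -/
inductive Walk (G : Multigraph) : G.V → G.V → Type
  | nil (v : G.V) : Walk G v v
  | cons {u v w : G.V} (e : G.E)
      (h : G.ends e = (u, v) ∨ G.ends e = (v, u)) (p : Walk G v w) : Walk G u w

namespace Walk

def edges {G : Multigraph} : ∀ {u v : G.V}, G.Walk u v → List G.E
  | _, _, .nil _ => []
  | _, _, .cons e _ p => e :: p.edges

def support {G : Multigraph} : ∀ {u v : G.V}, G.Walk u v → List G.V
  | _, _, .nil v => [v]
  | u, _, .cons _ _ p => u :: p.support

end Walk

def Connected (G : Multigraph) : Prop := ∀ u v : G.V, Nonempty (G.Walk u v)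

/-- An immersion model of `H` in `G`. -/
structure ImmersionModel (H G : Multigraph) where
  vmap : H.V → G.V
  inj : Function.Injective vmap
  emap : (e : H.E) → G.Walk (vmap (H.ends e).1) (vmap (H.ends e).2)
  isPath : ∀ e, ((emap e).support).Nodup
  edgeDisj : ∀ e e', e ≠ e' → ∀ f, f ∈ (emap e).edges → f ∉ (emap e').edges

/-- `H ≤_i G`. -/
def Immersion (H G : Multigraph) : Prop := Nonempty (ImmersionModel H G)

/-- A strong immersion model: no internal vertex of a path is a branch vertex. -/
structure StrongImmersionModel (H G : Multigraph) extends ImmersionModel H G where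
  strong : ∀ e, ∀ x, x ∈ (emap e).support →
    x ≠ vmap (H.ends e).1 → x ≠ vmap (H.ends e).2 → x ∉ Set.range vmap

/-- `H ≤_si G`. -/
def StrongImmersion (H G : Multigraph) : Prop := Nonempty (StrongImmersionModel H G)

/-- Isomorphism of multigraphs. -/
structure Iso (G H : Multigraph) where
  fv : G.V ≃ H.V
  fe : G.E ≃ H.E
  pres : ∀ e, H.ends (fe e) = (fv (G.ends e).1, fv (G.ends e).2)
           ∨ H.ends (fe e) = (fv (G.ends e).2, fv (G.ends e).1)

def Isomorphic (G H : Multigraph) : Prop := Nonempty (Iso G H)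

/-- The minimal obstruction set of a class `C` with respect to a partial order `le`. -/
def obstructions (le : Multigraph → Multigraph → Prop) (C : Set Multigraph) :
    Set Multigraph :=
  {G | G ∉ C ∧ ∀ G', le G' G → ¬ G'.Isomorphic G → G' ∈ C}

/-- `C_k`: the class of multigraphs of cutwidth at most `k`. -/
def cutwidthClass (k : ℕ) : Set Multigraph := {G | G.cutwidth ≤ k}

/-- The degree of a vertex (each parallel edge counts once at each endpoint). -/
noncomputable def degree (G : Multigraph) (v : G.V) : ℕ :=
  {e : G.E | (G.ends e).1 = v ∨ (G.ends e).2 = v}.ncard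

/-- The number of `A`-blocks of an ordering `ρ`: the number of maximal runs of
consecutive (in `ρ`) vertices belonging to `A`, counted via block-starting vertices. -/
noncomputable def blockCount (G : Multigraph) (ρ : G.V → ℕ) (A : Set G.V) : ℕ :=
  {v : G.V | v ∈ A ∧ ∀ u : G.V, ρ u < ρ v →
      ∃ w : G.V, w ∉ A ∧ ρ u ≤ ρ w ∧ ρ w < ρ v}.ncard

/-- The extension `G*` of a `k`-boundaried graph `(G, x)`. -/
def extension (G : Multigraph) {k : ℕ} (x : Fin k → G.V) : Multigraph where
  V := G.V ⊕ Fin k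
  E := G.E ⊕ Fin k
  finV := inferInstance
  finE := inferInstance
  ends := Sum.elim (fun e => (Sum.inl (G.ends e).1, Sum.inl (G.ends e).2))
                   (fun i => (Sum.inl (x i), Sum.inr i))
  loopless := by
    rintro (e | i)
    · simpa using G.loopless e
    · simp

/-- The join `𝐀 ⊕ 𝐁` of two `k`-boundaried graphs. -/
def join {k : ℕ} (A B : Multigraph) (x : Fin k → A.V) (y : Fin k → B.V) : Multigraph where
  V := A.V ⊕ B.V
  E := (A.E ⊕ B.E) ⊕ Fin k
  finV := inferInstance
  finE := inferInstance
  ends := Sum.elim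
    (Sum.elim (fun e => (Sum.inl (A.ends e).1, Sum.inl (A.ends e).2))
              (fun e => (Sum.inr (B.ends e).1, Sum.inr (B.ends e).2)))
    (fun i => (Sum.inl (x i), Sum.inr (y i)))
  loopless := by
    rintro ((e | e) | i)
    · simpa using A.loopless e
    · simpa using B.loopless e
    · simp

/-- An `ℓ`-bucketing of an ordering `ρ` (buckets indexed 1,…,ℓ). -/
def IsBucketing (G : Multigraph) (ρ : G.V → ℕ) (ℓ : ℕ) (T : G.V → ℕ) : Prop :=
  (∀ v, 1 ≤ T v ∧ T v ≤ ℓ) ∧ ∀ u v : G.V, ρ u ≤ ρ v → T u ≤ T v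

/-- `width(G,σ,T,i)`: the maximum size of a cut in `cuts(G,σ,T,i)`; these cuts
are described by their left side `S`, which contains all buckets before `i`,
a `σ`-downward-closed part of bucket `i`, and nothing else. -/
noncomputable def bucketWidth (G : Multigraph) (ρ : G.V → ℕ) (T : G.V → ℕ) (i : ℕ) : ℕ :=
  sSup {w | ∃ S : Set G.V,
    (∀ v, T v < i → v ∈ S) ∧ (∀ v ∈ S, T v ≤ i) ∧
    (∀ u v : G.V, T u = i → T v = i → ρ u ≤ ρ v → v ∈ S → u ∈ S) ∧
    w = G.delta S}

/-- A `(k,ℓ)`-bucket interface. -/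
structure BucketInterface (k ℓ : ℕ) where
  b : Fin k → ℕ
  b' : Fin k → ℕ
  mu : ℕ → ℕ
  mu' : ℕ → ℕ
  b_mem : ∀ i, b i ∈ Set.Icc 1 ℓ
  b'_mem : ∀ i, b' i ∈ Set.Icc 1 ℓ
  mu_le : ∀ j, mu j ≤ k
  mu'_le : ∀ j, mu' j ≤ k

/-- A `k`-boundaried graph `(G, x)` conforms with a `(k,ℓ)`-bucket interface. -/
def Conforms {k : ℕ} (G : Multigraph) (x : Fin k → G.V) (ℓ : ℕ)
    (I : BucketInterface k ℓ) : Prop :=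
  ∃ ρ : (G.extension x).V → ℕ, Function.Injective ρ ∧
  ∃ T : (G.extension x).V → ℕ, (G.extension x).IsBucketing ρ ℓ T ∧
    (∀ v : G.V, Odd (T (Sum.inl v))) ∧
    (∀ i : Fin k, Even (T (Sum.inr i))) ∧
    (∀ i : Fin k, T (Sum.inl (x i)) = I.b i) ∧
    (∀ i : Fin k, T (Sum.inr i) = I.b' i) ∧
    (∀ j ∈ Set.Icc 1 ℓ,
      G.bucketWidth (fun v => ρ (Sum.inl v)) (fun v => T (Sum.inl v)) j ≤ I.mu j) ∧
    (∀ j ∈ Set.Icc 1 ℓ, (G.extension x).bucketWidth ρ T j ≤ I.mu' j)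

/-- `m` pairwise edge-disjoint paths between the sets `X` and `Y`. -/
def ConnectorBetween (G : Multigraph) (X Y : Set G.V) (m : ℕ) : Prop :=
  ∃ (s t : Fin m → G.V) (P : (i : Fin m) → G.Walk (s i) (t i)),
    (∀ i, s i ∈ X) ∧ (∀ i, t i ∈ Y) ∧ (∀ i, (P i).support.Nodup) ∧
    ∀ i j, i ≠ j → ∀ f, f ∈ (P i).edges → f ∉ (P j).edges

/-- A linked ordering. -/
def Linked (G : Multigraph) (ρ : G.V → ℕ) : Prop :=
  ∀ u u' : G.V, ρ u ≤ ρ u' →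
    G.ConnectorBetween {z | ρ z ≤ ρ u} {z | ¬ ρ z ≤ ρ u'}
      (sInf {w | ∃ v : G.V, ρ u ≤ ρ v ∧ ρ v ≤ ρ u' ∧ w = G.delta {z | ρ z ≤ ρ v}})

/-- The multigraph obtained by deleting a set of edges. -/
def deleteEdges (G : Multigraph) (F : Set G.E) : Multigraph where
  V := G.V
  E := {e : G.E // e ∉ F}
  finV := G.finV
  finE := inferInstance
  ends e := G.ends e.1
  loopless e := G.loopless e.1

/-- `dcw_k(G)`: minimum number of edges to delete to reach cutwidth at most `k`. -/
noncomputable def dcw (k : ℕ) (G : Multigraph) : ℕ :=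
  sInf {w | ∃ F : Set G.E, (G.deleteEdges F).cutwidth ≤ k ∧ F.ncard = w}

/-- The class `C_{w,k}`. -/
def dcwClass (w k : ℕ) : Set Multigraph := {G | dcw k G ≤ w}

/-- Induced subgraph `G[X]`. -/
def induce (G : Multigraph) (X : Set G.V) : Multigraph where
  V := X
  E := {e : G.E // (G.ends e).1 ∈ X ∧ (G.ends e).2 ∈ X}
  finV := inferInstance
  finE := inferInstance
  ends e := (⟨(G.ends e.1).1, e.2.1⟩, ⟨(G.ends e.1).2, e.2.2⟩)
  loopless := by
    intro e h
    exact G.loopless e.1 (Subtype.ext_iff.mp h)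

/-- A graph is `ℋ`-immersion-free if it contains no member of `ℋ` as an immersion. -/
def ImmersionFree (H : Set Multigraph) (G : Multigraph) : Prop :=
  ∀ X ∈ H, ¬ Immersion X G

/-- `aic_ℋ(G)`: minimum number of edge deletions to reach an `ℋ`-immersion-free graph. -/
noncomputable def aic (H : Set Multigraph) (G : Multigraph) : ℕ :=
  sInf {w | ∃ F : Set G.E, ImmersionFree H (G.deleteEdges F) ∧ F.ncard = w}

/-- The class `C_{w,ℋ}`. -/
def aicClass (w : ℕ) (H : Set Multigraph) : Set Multigraph := {G | aic H G ≤ w}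

/-- `ℋ` is a `≤_i`-antichain. -/
def IsAntichainImm (H : Set Multigraph) : Prop :=
  ∀ G₁ ∈ H, ∀ G₂ ∈ H, Immersion G₁ G₂ → Isomorphic G₁ G₂

/-- Disjoint union of two multigraphs. -/
def disjUnion (G H : Multigraph) : Multigraph where
  V := G.V ⊕ H.V
  E := G.E ⊕ H.E
  finV := inferInstance
  finE := inferInstance
  ends := Sum.elim (fun e => (Sum.inl (G.ends e).1, Sum.inl (G.ends e).2))
                   (fun e => (Sum.inr (H.ends e).1, Sum.inr (H.ends e).2))
  loopless := by
    rintro (e | e)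
    · simpa using G.loopless e
    · simpa using H.loopless e

/-- Disjoint union of a finite family of multigraphs. -/
def sigmaUnion {m : ℕ} (Gs : Fin m → Multigraph) : Multigraph where
  V := Σ i, (Gs i).V
  E := Σ i, (Gs i).E
  finV := inferInstance
  finE := inferInstance
  ends e := (⟨e.1, ((Gs e.1).ends e.2).1⟩, ⟨e.1, ((Gs e.1).ends e.2).2⟩)
  loopless := by
    intro e h
    exact (Gs e.1).loopless e.2 (by simpa using h)

/-- `cw_σ(G,X) = δ_G(X) + cw_{σ_X}(G[X])`. -/
noncomputable def cwRel (G : Multigraph) (ρ : G.V → ℕ) (X : Set G.V) : ℕ :=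
  G.delta X + (G.induce X).cwOrd (fun v => ρ v.val)

/-- Membership in the family of prefixes relevant to `X`-linkedness: the complement
of `X` (the prefix right before `X` starts) and the prefixes ending inside `X`. -/
def IsXPrefix (G : Multigraph) (ρ : G.V → ℕ) (X : Set G.V) (P : Set G.V) : Prop :=
  P = Xᶜ ∨ ∃ v ∈ X, P = {z | ρ z ≤ ρ v}

/-- An `X`-linked ordering. -/
def XLinked (G : Multigraph) (ρ : G.V → ℕ) (X : Set G.V) : Prop :=
  (∀ u v : G.V, u ∉ X → v ∈ X → ρ u < ρ v) ∧
  ∀ P P' : Set G.V, G.IsXPrefix ρ X P → G.IsXPrefix ρ X P' → P ⊆ P' →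
    G.ConnectorBetween P P'ᶜ
      (sInf {w | ∃ Q : Set G.V, G.IsXPrefix ρ X Q ∧ P ⊆ Q ∧ Q ⊆ P' ∧ w = G.delta Q})

end Multigraph

/-!
Take an ordering `τ` of optimum width that minimises first the sum of all its prefix cuts and then
the number of pairs it orders differently from `σ`.

Fix a prefix `A` of `σ` and split every cut into the edges meeting `A` and the others. A gap
between consecutive `A`-blocks of `τ` that is joined to `A` by an edge contributes an edge to
`δ(A)`, so there are at most `r` such gaps. Across any other gap, moving the next block in front of
the gap removes inversions, and moving the gap in front of the previous block lowers the cut sum;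
by minimality, the part of the cut meeting `A`, read at the ends of consecutive blocks, decreases
strictly until it first fails to and then increases strictly. Being at most `cw(G)`, it allows no
`2 cw(G) + 3` consecutive blocks without a gap joined to `A`, so `A` has fewer than
`(r + 1)(2 cw(G) + 3)` blocks; this suffices as `cw(G) ≤ r`.
-/
theorem le_of_descent_then_ascent {X : ℕ → ℕ} {c k : ℕ} (hX : ∀ s ≤ k, X s ≤ c)
    (hstep : ∀ s, s + 2 ≤ k → X s ≤ X (s + 1) → X (s + 1) < X (s + 2)) : k ≤ 2 * c + 1 := by
  -- Either `X` has descended strictly so far, or it has ascended strictly since it first stopped.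
  have key : ∀ s ≤ k, X s + s ≤ X 0 ∨ ∃ p, s = p + 1 ∧ X p ≤ X s ∧ s ≤ X s + c + 1 := by
    intro s
    induction s with
    | zero => simp
    | succ s ih =>
      intro hs
      have hX₀ := hX 0 (Nat.zero_le _)
      rcases ih (by omega) with h | ⟨p, rfl, hle, hp⟩
      · rcases lt_or_ge (X (s + 1)) (X s) with h' | h'
        · left
          omega
        · exact Or.inr ⟨s, rfl, h', by omega⟩
      · have : X (p + 1) < X (p + 1 + 1) := hstep p (by omega) hle
        exact Or.inr ⟨p + 1, rfl, this.le, by omega⟩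
  have := hX 0 (Nat.zero_le _)
  have := hX k le_rfl
  rcases key k le_rfl with h | ⟨p, -, -, h⟩ <;> omega

theorem lt_mul_of_forall_window {T : Set ℕ} (hT : T.Finite) {m L : ℕ} (hL : 0 < L)
    (h : ∀ l, l + L ≤ m → ∃ t ∈ T, l ≤ t ∧ t < l + L) : m < (T.ncard + 1) * L := by
  have hwin : ∀ j < m / L, ∃ t ∈ T, t / L = j := fun j hj => by
    obtain ⟨t, ht, h₁, h₂⟩ := h (j * L) <| by
      simpa [add_one_mul] using (Nat.mul_le_mul_right L hj).trans (Nat.div_mul_le_self m L)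
    exact ⟨t, ht, Nat.div_eq_of_lt_le h₁ (by rwa [add_one_mul])⟩
  choose! t ht using hwin
  have hcount : m / L ≤ T.ncard := by
    rw [← Set.ncard_Iio_nat (m / L)]
    exact Set.ncard_le_ncard_of_injOn t (fun j hj => (ht j hj).1)
      (fun i hi j hj hij => (ht i hi).2.symm.trans (hij ▸ (ht j hj).2)) hT
  calc m < L * (m / L + 1) := Nat.lt_mul_div_succ m hL
    _ ≤ (T.ncard + 1) * L := by rw [mul_comm]; exact Nat.mul_le_mul_right L (by omega)

theorem lt_mul_of_ascent {T : Set ℕ} (hT : T.Finite) {f : ℕ → ℕ} {c m : ℕ}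
    (hf : ∀ t < m, f t ≤ c)
    (hstep : ∀ t, t + 2 < m → t ∉ T → t + 1 ∉ T → f t ≤ f (t + 1) → f (t + 1) < f (t + 2)) :
    m < (T.ncard + 1) * (2 * c + 3) := by
  refine lt_mul_of_forall_window hT (by omega) fun l hl => ?_
  by_contra! hfree
  have := le_of_descent_then_ascent (X := fun s => f (l + s)) (k := 2 * c + 2)
    (fun s hs => hf _ (by omega)) fun s hs hle => by
      have := hstep (l + s) (by omega) (fun h => by have := hfree _ h; omega)
        (fun h => by have := hfree _ h; omega) hle
      simpa only [add_assoc] using this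
  omega

def IsRunStart (p : ℕ → Prop) (i : ℕ) : Prop :=
  p i ∧ (i = 0 ∨ ¬ p (i - 1))

/-- `[a t, b t)` are the maximal runs of `p` in increasing order, `[b t, a (t + 1))` the gaps. -/
theorem exists_runs {p : ℕ → Prop} {n m : ℕ} (hp : ∀ i, p i → i < n)
    (hm : {i | IsRunStart p i}.ncard = m) :
    ∃ a b : ℕ → ℕ, (∀ s t, s ≤ t → t < m → a s ≤ a t) ∧
      (∀ t < m, a t < b t ∧ b t ≤ n ∧ ∀ i, a t ≤ i → i < b t → p i) ∧
      ∀ t, t + 1 < m → b t < a (t + 1) ∧ ∀ i, b t ≤ i → i < a (t + 1) → ¬ p i := by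
  classical
  have hfin : {i | IsRunStart p i}.Finite :=
    (Set.finite_Iio n).subset fun i hi => hp i hi.1
  have hcard : hfin.toFinset.card = m := by rw [← hm, Set.ncard_eq_toFinset_card _ hfin]
  have hstart : ∀ t < m, IsRunStart p (Nat.nth (IsRunStart p) t) := fun t ht =>
    Nat.nth_mem_of_lt_card hfin (hcard ▸ ht)
  have hmono : ∀ s t, s ≤ t → t < m → Nat.nth (IsRunStart p) s ≤ Nat.nth (IsRunStart p) t :=
    fun s t hst ht => Nat.nth_le_nth_of_lt_card hfin hst (hcard ▸ ht)
  have hsucc : ∀ t, t + 1 < m → Nat.nth (IsRunStart p) t < Nat.nth (IsRunStart p) (t + 1) :=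
    fun t ht => Nat.nth_lt_nth_of_lt_card hfin (lt_add_one t) (hcard ▸ ht)
  have hindex : ∀ i, IsRunStart p i → ∃ s < m, Nat.nth (IsRunStart p) s = i := fun i hi =>
    hcard ▸ Nat.exists_lt_card_finite_nth_eq (p := IsRunStart p) hfin hi
  generalize Nat.nth (IsRunStart p) = a at *
  have hend : ∀ t, ∃ i, a t < i ∧ ¬ p i := fun t =>
    ⟨max (a t + 1) n, by omega, fun h => by have := hp _ h; omega⟩
  refine ⟨a, fun t => Nat.find (hend t), hmono, fun t ht => ?_, fun t ht => ?_⟩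
  · have hn : a t < n := hp _ (hstart t ht).1
    refine ⟨(Nat.find_spec (hend t)).1, Nat.find_min' _ ⟨by omega, fun h => by
      have := hp _ h; omega⟩, fun i h₁ h₂ => ?_⟩
    rcases h₁.eq_or_lt with rfl | h₁
    · exact (hstart t ht).1
    · by_contra hi
      exact Nat.find_min (hend t) h₂ ⟨h₁, hi⟩
  · dsimp only
    have hlt := hsucc t ht
    have hprev : ¬ p (a (t + 1) - 1) := (hstart (t + 1) ht).2.resolve_left (by omega)
    have hne : a (t + 1) - 1 ≠ a t := fun h => hprev (h ▸ (hstart t (by omega)).1)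
    have hb : Nat.find (hend t) ≤ a (t + 1) - 1 := Nat.find_min' _ ⟨by omega, hprev⟩
    refine ⟨by omega, fun i h₁ h₂ hi => ?_⟩
    -- the first position of `p` after `b t` would start a run strictly between `a t` and `a (t + 1)`
    have hex : ∃ j, Nat.find (hend t) ≤ j ∧ p j := ⟨i, h₁, hi⟩
    have hj := Nat.find_spec hex
    have hji : Nat.find hex ≤ i := Nat.find_min' hex ⟨h₁, hi⟩
    have hbj : Nat.find (hend t) < Nat.find hex :=
      lt_of_le_of_ne hj.1 fun h => (Nat.find_spec (hend t)).2 (h ▸ hj.2)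
    obtain ⟨s, hs, hsj⟩ := hindex _
      ⟨hj.2, Or.inr fun h => Nat.find_min hex (Nat.sub_one_lt_of_lt hbj) ⟨by omega, h⟩⟩
    rcases Nat.lt_or_ge t s with hts | hst
    · have := hmono (t + 1) s hts hs
      omega
    · have := hmono s t hst (by omega)
      have := (Nat.find_spec (hend t)).1
      omega

namespace Multigraph

variable {G : Multigraph}

def IsolatedFrom (G : Multigraph) (W A : Set G.V) : Prop :=
  ∀ e : G.E, ¬ (((G.ends e).1 ∈ W ∨ (G.ends e).2 ∈ W) ∧ ((G.ends e).1 ∈ A ∨ (G.ends e).2 ∈ A))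

noncomputable def touchDelta (G : Multigraph) (A S : Set G.V) : ℕ :=
  {e : G.E | ¬ ((G.ends e).1 ∈ S ↔ (G.ends e).2 ∈ S) ∧
    ((G.ends e).1 ∈ A ∨ (G.ends e).2 ∈ A)}.ncard

noncomputable def avoidDelta (G : Multigraph) (A S : Set G.V) : ℕ :=
  {e : G.E | ¬ ((G.ends e).1 ∈ S ↔ (G.ends e).2 ∈ S) ∧
    (G.ends e).1 ∉ A ∧ (G.ends e).2 ∉ A}.ncard

theorem delta_eq_touchDelta_add_avoidDelta (A S : Set G.V) :
    G.delta S = G.touchDelta A S + G.avoidDelta A S := by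
  rw [delta, touchDelta, avoidDelta, ← Set.ncard_union_eq _ (Set.toFinite _) (Set.toFinite _)]
  · congr 1
    ext e
    simp only [Set.mem_ofPred_eq, Set.mem_union]
    tauto
  · exact Set.disjoint_left.2 fun e h₁ h₂ => by simp only [Set.mem_ofPred_eq] at h₁ h₂; tauto

theorem touchDelta_le_delta (A S : Set G.V) : G.touchDelta A S ≤ G.delta S :=
  (G.delta_eq_touchDelta_add_avoidDelta A S).symm ▸ Nat.le_add_right _ _

theorem touchDelta_congr {A W S S' : Set G.V} (hW : G.IsolatedFrom W A)
    (h : ∀ y ∉ W, y ∈ S ↔ y ∈ S') : G.touchDelta A S = G.touchDelta A S' := by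
  unfold touchDelta
  congr 1
  ext e
  simp only [Set.mem_ofPred_eq]
  by_cases hA : (G.ends e).1 ∈ A ∨ (G.ends e).2 ∈ A
  · have := hW e
    rw [h _ (by tauto), h _ (by tauto)]
  · simp only [hA, and_false]

theorem avoidDelta_congr {A S S' : Set G.V} (h : ∀ y ∉ A, y ∈ S ↔ y ∈ S') :
    G.avoidDelta A S = G.avoidDelta A S' := by
  unfold avoidDelta
  congr 1
  ext e
  simp only [Set.mem_ofPred_eq]
  by_cases hA : (G.ends e).1 ∉ A ∧ (G.ends e).2 ∉ A
  · rw [h _ hA.1, h _ hA.2]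
  · simp only [hA, and_false]

theorem ncard_le_delta_of_pairwiseDisjoint {ι : Type*} {T : Set ι} {W : ι → Set G.V}
    {A : Set G.V} (hdisj : T.PairwiseDisjoint W) (hA : ∀ t ∈ T, Disjoint (W t) A)
    (hjoin : ∀ t ∈ T, ¬ G.IsolatedFrom (W t) A) : T.ncard ≤ G.delta A := by
  have hedge : ∀ t ∈ T, ∃ e : G.E, ((G.ends e).1 ∈ W t ∨ (G.ends e).2 ∈ W t) ∧
      ((G.ends e).1 ∈ A ∨ (G.ends e).2 ∈ A) := fun t ht => by
    simpa only [IsolatedFrom, not_forall_not] using hjoin t ht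
  rcases T.eq_empty_or_nonempty with rfl | ⟨t₀, ht₀⟩
  · simp
  have : Nonempty G.E := ⟨(hedge t₀ ht₀).choose⟩
  choose! e he using hedge
  have hWA : ∀ t ∈ T, ∀ x ∈ W t, x ∉ A := fun t ht x hx => Set.disjoint_left.1 (hA t ht) hx
  refine Set.ncard_le_ncard_of_injOn e (fun t ht => ?_) (fun t ht s hs hts => ?_)
  · have h₁ := hWA t ht (G.ends (e t)).1
    have h₂ := hWA t ht (G.ends (e t)).2
    have := he t ht
    simp only [Set.mem_ofPred_eq]
    tauto
  · -- the end of `e t` outside `A` would lie in both `W t` and `W s`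
    by_contra hne
    have hts' := Set.disjoint_left.1 (hdisj ht hs hne)
    have h₁ := hWA t ht (G.ends (e t)).1
    have h₂ := hWA t ht (G.ends (e t)).2
    have h₃ := hWA s hs (G.ends (e t)).1
    have h₄ := hWA s hs (G.ends (e t)).2
    have := he t ht
    have := hts ▸ he s hs
    have := @hts' (G.ends (e t)).1
    have := @hts' (G.ends (e t)).2
    tauto

theorem delta_le_cwOrd (ρ : G.V → ℕ) (v : G.V) : G.delta {u | ρ u ≤ ρ v} ≤ G.cwOrd ρ :=
  le_csSup ((Set.finite_range fun v => G.delta {u | ρ u ≤ ρ v}).subset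
    (by rintro _ ⟨v, rfl⟩; exact ⟨v, rfl⟩)).bddAbove ⟨v, rfl⟩

theorem cwOrd_le_of_forall {ρ : G.V → ℕ} {k : ℕ} (h : ∀ v, G.delta {u | ρ u ≤ ρ v} ≤ k) :
    G.cwOrd ρ ≤ k :=
  csSup_le' <| by rintro _ ⟨v, rfl⟩; exact h v

theorem delta_setOf_lt_le_cwOrd (ρ : G.V → ℕ) (i : ℕ) : G.delta {u | ρ u < i} ≤ G.cwOrd ρ := by
  rcases Set.eq_empty_or_nonempty {u | ρ u < i} with h | h
  · simp [h, delta]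
  obtain ⟨v, hv, hmax⟩ := Set.exists_max_image _ ρ (Set.toFinite _) h
  have hset : {u | ρ u < i} = {u | ρ u ≤ ρ v} :=
    Set.ext fun u => ⟨hmax u, fun hu => show ρ u < i from lt_of_le_of_lt hu hv⟩
  rw [hset]
  exact delta_le_cwOrd ρ v

theorem cutwidth_le_cwOrd {ρ : G.V → ℕ} (hρ : Function.Injective ρ) : G.cutwidth ≤ G.cwOrd ρ :=
  Nat.sInf_le ⟨ρ, hρ, rfl⟩

def IsContiguous (G : Multigraph) (τ : G.V → ℕ) : Prop :=
  Function.Injective τ ∧ ∀ v, τ v < Nat.card G.V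

theorem IsContiguous.exists_eq {τ : G.V → ℕ} (hτ : G.IsContiguous τ) {i : ℕ}
    (hi : i < Nat.card G.V) : ∃ v, τ v = i := by
  have hinj : Function.Injective fun v => (⟨τ v, hτ.2 v⟩ : Fin (Nat.card G.V)) :=
    fun u v huv => hτ.1 (congrArg Fin.val huv)
  obtain ⟨v, hv⟩ := (hinj.bijective_of_nat_card_le (by simp)).2 ⟨i, hi⟩
  exact ⟨v, congrArg Fin.val hv⟩

noncomputable def rank (ρ : G.V → ℕ) (v : G.V) : ℕ :=
  {u | ρ u < ρ v}.ncard

theorem rank_le_rank_iff {ρ : G.V → ℕ} {u v : G.V} :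
    rank ρ u ≤ rank ρ v ↔ ρ u ≤ ρ v := by
  refine ⟨fun h => ?_, fun h => Set.ncard_le_ncard fun w hw => lt_of_lt_of_le hw h⟩
  by_contra! hvu
  have hsub : {w | ρ w < ρ v} ⊂ {w | ρ w < ρ u} :=
    Set.ssubset_iff_exists.2 ⟨fun w hw => lt_trans hw hvu, v, hvu, lt_irrefl (ρ v)⟩
  exact (Set.ncard_lt_ncard hsub).not_ge h

theorem isContiguous_rank {ρ : G.V → ℕ} (hρ : Function.Injective ρ) :
    G.IsContiguous (rank ρ) := by
  refine ⟨fun u v huv => hρ (le_antisymm ?_ ?_), fun v => ?_⟩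
  · exact rank_le_rank_iff.1 huv.le
  · exact rank_le_rank_iff.1 huv.ge
  · rw [← Set.ncard_univ]
    refine Set.ncard_lt_ncard (Set.ssubset_univ_iff.2 fun h => ?_)
    have hv : v ∈ {u | ρ u < ρ v} := h ▸ Set.mem_univ v
    exact lt_irrefl (ρ v) hv

theorem exists_isContiguous_cwOrd_eq_cutwidth (G : Multigraph) :
    ∃ τ, G.IsContiguous τ ∧ G.cwOrd τ = G.cutwidth := by
  have hne : {w | ∃ ρ : G.V → ℕ, Function.Injective ρ ∧ G.cwOrd ρ = w}.Nonempty :=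
    ⟨_, _, Fin.val_injective.comp (Finite.equivFin G.V).injective, rfl⟩
  obtain ⟨ρ, hρ, hw⟩ := Nat.sInf_mem hne
  refine ⟨rank ρ, isContiguous_rank hρ, ?_⟩
  simp only [cwOrd, rank_le_rank_iff]
  exact hw

noncomputable def cutSum (G : Multigraph) (τ : G.V → ℕ) : ℕ :=
  ∑ᶠ v, G.delta {u | τ u ≤ τ v}

noncomputable def inversions (σ τ : G.V → ℕ) : ℕ :=
  {p : G.V × G.V | σ p.1 < σ p.2 ∧ τ p.2 < τ p.1}.ncard

def Dominates (G : Multigraph) (τ' τ : G.V → ℕ) : Prop :=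
  ∀ v, G.delta {u | τ' u ≤ τ' v} ≤ G.delta {u | τ u ≤ τ v}

theorem Dominates.cwOrd_le {τ' τ : G.V → ℕ} (h : G.Dominates τ' τ) : G.cwOrd τ' ≤ G.cwOrd τ :=
  cwOrd_le_of_forall fun v => (h v).trans (delta_le_cwOrd τ v)

theorem Dominates.cutSum_le {τ' τ : G.V → ℕ} (h : G.Dominates τ' τ) :
    G.cutSum τ' ≤ G.cutSum τ := by
  have := Fintype.ofFinite G.V
  simp only [cutSum, finsum_eq_sum_of_fintype]
  exact Finset.sum_le_sum fun v _ => h v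

theorem Dominates.cutSum_lt {τ' τ : G.V → ℕ} (h : G.Dominates τ' τ) {v : G.V}
    (hv : G.delta {u | τ' u ≤ τ' v} < G.delta {u | τ u ≤ τ v}) : G.cutSum τ' < G.cutSum τ := by
  have := Fintype.ofFinite G.V
  simp only [cutSum, finsum_eq_sum_of_fintype]
  exact Finset.sum_lt_sum (fun v _ => h v) ⟨v, Finset.mem_univ v, hv⟩

def IsMinimal (G : Multigraph) (σ τ : G.V → ℕ) : Prop :=
  G.IsContiguous τ ∧ ∀ τ', G.IsContiguous τ' → G.Dominates τ' τ →
    ¬ toLex (G.cutSum τ', inversions σ τ') < toLex (G.cutSum τ, inversions σ τ)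

theorem exists_isMinimal (G : Multigraph) (σ : G.V → ℕ) :
    ∃ τ, G.IsMinimal σ τ ∧ G.cwOrd τ = G.cutwidth := by
  obtain ⟨τ₀, hτ₀, hw₀⟩ := G.exists_isContiguous_cwOrd_eq_cutwidth
  obtain ⟨τ, ⟨hτ, hw⟩, hmin⟩ :=
    (InvImage.wf (fun τ => toLex (G.cutSum τ, inversions σ τ)) wellFounded_lt).has_min
      {τ | G.IsContiguous τ ∧ G.cwOrd τ ≤ G.cutwidth} ⟨τ₀, hτ₀, hw₀.le⟩
  exact ⟨τ, ⟨hτ, fun τ' hτ' hdom => hmin τ' ⟨hτ', hdom.cwOrd_le.trans hw⟩⟩,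
    hw.antisymm (cutwidth_le_cwOrd hτ.1)⟩

theorem IsMinimal.cutSum_le {σ τ τ' : G.V → ℕ} (hτ : G.IsMinimal σ τ) (hτ' : G.IsContiguous τ')
    (hdom : G.Dominates τ' τ) : G.cutSum τ ≤ G.cutSum τ' := by
  have := hτ.2 τ' hτ' hdom
  rw [Prod.Lex.toLex_lt_toLex] at this
  omega

theorem IsMinimal.inversions_le {σ τ τ' : G.V → ℕ} (hτ : G.IsMinimal σ τ)
    (hτ' : G.IsContiguous τ') (hdom : G.Dominates τ' τ) : inversions σ τ ≤ inversions σ τ' := by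
  have hlex := hτ.2 τ' hτ' hdom
  have hsum := hdom.cutSum_le
  rw [Prod.Lex.toLex_lt_toLex] at hlex
  omega

def swapMap (a b c p : ℕ) : ℕ :=
  if a ≤ p ∧ p < b then p + (c - b) else if b ≤ p ∧ p < c then p - (b - a) else p

section Swap

variable {σ τ : G.V → ℕ} {a b c : ℕ}

theorem swapMap_injective (hab : a ≤ b) (hbc : b ≤ c) : Function.Injective (swapMap a b c) := by
  intro p q h
  simp only [swapMap] at h
  split_ifs at h <;> omega

theorem IsContiguous.swap (hτ : G.IsContiguous τ) (hab : a ≤ b) (hbc : b ≤ c)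
    (hc : c ≤ Nat.card G.V) : G.IsContiguous (swapMap a b c ∘ τ) := by
  refine ⟨(swapMap_injective hab hbc).comp hτ.1, fun v => ?_⟩
  have := hτ.2 v
  simp only [Function.comp_apply, swapMap]
  split_ifs <;> omega

theorem dominates_swap (hab : a ≤ b) (hbc : b ≤ c)
    (hleft : ∀ v, a ≤ τ v → τ v < b → G.delta {u | (swapMap a b c ∘ τ) u ≤ (swapMap a b c ∘ τ) v}
      ≤ G.delta {u | τ u ≤ τ v})
    (hright : ∀ v, b ≤ τ v → τ v < c → G.delta {u | (swapMap a b c ∘ τ) u ≤ (swapMap a b c ∘ τ) v}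
      ≤ G.delta {u | τ u ≤ τ v}) :
    G.Dominates (swapMap a b c ∘ τ) τ := by
  intro v
  by_cases hv : a ≤ τ v ∧ τ v < c
  · rcases lt_or_ge (τ v) b with h | h
    · exact hleft v hv.1 h
    · exact hright v h hv.2
  · refine le_of_eq (congrArg G.delta (Set.ext fun u => ?_))
    simp only [Set.mem_ofPred_eq, Function.comp_apply, swapMap]
    split_ifs <;> omega

theorem inversions_swap_lt (hτ : G.IsContiguous τ) (hab : a < b) (hbc : b < c)
    (hc : c ≤ Nat.card G.V)
    (hσ : ∀ x y, a ≤ τ x → τ x < b → b ≤ τ y → τ y < c → σ y < σ x) :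
    inversions σ (swapMap a b c ∘ τ) < inversions σ τ := by
  obtain ⟨x, hx⟩ := hτ.exists_eq (hab.trans (hbc.trans_le hc))
  obtain ⟨y, hy⟩ := hτ.exists_eq (hbc.trans_le hc)
  refine Set.ncard_lt_ncard (Set.ssubset_iff_exists.2 ⟨?_, (y, x), ?_, ?_⟩)
  · rintro ⟨p, q⟩ ⟨hpq, hqp⟩
    refine ⟨hpq, ?_⟩
    dsimp only at hpq hqp ⊢
    by_contra! hle
    have hseg : a ≤ τ p ∧ τ p < b ∧ b ≤ τ q ∧ τ q < c := by
      simp only [Function.comp_apply, swapMap] at hqp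
      split_ifs at hqp <;> omega
    exact (hσ p q hseg.1 hseg.2.1 hseg.2.2.1 hseg.2.2.2).not_gt hpq
  · exact ⟨hσ x y hx.ge (hx.trans_lt hab) hy.ge (hy.trans_lt hbc), by simp only [hx, hy]; omega⟩
  · rintro ⟨-, h⟩
    simp only [Function.comp_apply, hx, hy, swapMap] at h
    split_ifs at h <;> omega

theorem delta_swap_add_of_block_gap_left {A : Set G.V} (hB : ∀ u, a ≤ τ u → τ u < b → u ∈ A)
    (hW : G.IsolatedFrom {u | b ≤ τ u ∧ τ u < c} A) (hbc : b ≤ c) {v : G.V} (hv₁ : a ≤ τ v)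
    (hv₂ : τ v < b) :
    G.delta {u | (swapMap a b c ∘ τ) u ≤ (swapMap a b c ∘ τ) v} + G.avoidDelta A {u | τ u < b} =
      G.delta {u | τ u ≤ τ v} + G.avoidDelta A {u | τ u < c} := by
  have hB' : ∀ y ∉ A, ¬ (a ≤ τ y ∧ τ y < b) := fun y hy h => hy (hB y h.1 h.2)
  have h₁ : G.touchDelta A {u | (swapMap a b c ∘ τ) u ≤ (swapMap a b c ∘ τ) v} =
      G.touchDelta A {u | τ u ≤ τ v} := touchDelta_congr hW fun y hy => by
    simp only [Set.mem_ofPred_eq, Function.comp_apply, swapMap] at hy ⊢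
    split_ifs <;> omega
  have h₂ : G.avoidDelta A {u | (swapMap a b c ∘ τ) u ≤ (swapMap a b c ∘ τ) v} =
      G.avoidDelta A {u | τ u < c} := avoidDelta_congr fun y hy => by
    have := hB' y hy
    simp only [Set.mem_ofPred_eq, Function.comp_apply, swapMap]
    split_ifs <;> omega
  have h₃ : G.avoidDelta A {u | τ u ≤ τ v} = G.avoidDelta A {u | τ u < b} :=
    avoidDelta_congr fun y hy => by
      have := hB' y hy
      simp only [Set.mem_ofPred_eq]
      omega
  rw [delta_eq_touchDelta_add_avoidDelta A, delta_eq_touchDelta_add_avoidDelta A, h₁, h₂, h₃]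
  omega

theorem delta_swap_add_of_block_gap_right {A : Set G.V} (hB : ∀ u, a ≤ τ u → τ u < b → u ∈ A)
    (hW : G.IsolatedFrom {u | b ≤ τ u ∧ τ u < c} A) (hab : a ≤ b) {v : G.V} (hv₁ : b ≤ τ v)
    (hv₂ : τ v < c) :
    G.delta {u | (swapMap a b c ∘ τ) u ≤ (swapMap a b c ∘ τ) v} + G.touchDelta A {u | τ u < b} =
      G.delta {u | τ u ≤ τ v} + G.touchDelta A {u | τ u < a} := by
  have hB' : ∀ y ∉ A, ¬ (a ≤ τ y ∧ τ y < b) := fun y hy h => hy (hB y h.1 h.2)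
  have h₁ : G.touchDelta A {u | (swapMap a b c ∘ τ) u ≤ (swapMap a b c ∘ τ) v} =
      G.touchDelta A {u | τ u < a} := touchDelta_congr hW fun y hy => by
    simp only [Set.mem_ofPred_eq, Function.comp_apply, swapMap] at hy ⊢
    split_ifs <;> omega
  have h₂ : G.touchDelta A {u | τ u ≤ τ v} = G.touchDelta A {u | τ u < b} :=
    touchDelta_congr hW fun y hy => by
      simp only [Set.mem_ofPred_eq] at hy ⊢
      omega
  have h₃ : G.avoidDelta A {u | (swapMap a b c ∘ τ) u ≤ (swapMap a b c ∘ τ) v} =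
      G.avoidDelta A {u | τ u ≤ τ v} := avoidDelta_congr fun y hy => by
    have := hB' y hy
    simp only [Set.mem_ofPred_eq, Function.comp_apply, swapMap]
    split_ifs <;> omega
  rw [delta_eq_touchDelta_add_avoidDelta A, delta_eq_touchDelta_add_avoidDelta A, h₁, h₂, h₃]
  omega

theorem delta_swap_add_of_gap_block_left {A : Set G.V}
    (hW : G.IsolatedFrom {u | a ≤ τ u ∧ τ u < b} A) (hB : ∀ u, b ≤ τ u → τ u < c → u ∈ A)
    (hbc : b ≤ c) {v : G.V} (hv₁ : a ≤ τ v) (hv₂ : τ v < b) :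
    G.delta {u | (swapMap a b c ∘ τ) u ≤ (swapMap a b c ∘ τ) v} + G.touchDelta A {u | τ u < a} =
      G.delta {u | τ u ≤ τ v} + G.touchDelta A {u | τ u < c} := by
  have hB' : ∀ y ∉ A, ¬ (b ≤ τ y ∧ τ y < c) := fun y hy h => hy (hB y h.1 h.2)
  have h₁ : G.touchDelta A {u | (swapMap a b c ∘ τ) u ≤ (swapMap a b c ∘ τ) v} =
      G.touchDelta A {u | τ u < c} := touchDelta_congr hW fun y hy => by
    simp only [Set.mem_ofPred_eq, Function.comp_apply, swapMap] at hy ⊢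
    split_ifs <;> omega
  have h₂ : G.touchDelta A {u | τ u ≤ τ v} = G.touchDelta A {u | τ u < a} :=
    touchDelta_congr hW fun y hy => by
      simp only [Set.mem_ofPred_eq] at hy ⊢
      omega
  have h₃ : G.avoidDelta A {u | (swapMap a b c ∘ τ) u ≤ (swapMap a b c ∘ τ) v} =
      G.avoidDelta A {u | τ u ≤ τ v} := avoidDelta_congr fun y hy => by
    have := hB' y hy
    simp only [Set.mem_ofPred_eq, Function.comp_apply, swapMap]
    split_ifs <;> omega
  rw [delta_eq_touchDelta_add_avoidDelta A, delta_eq_touchDelta_add_avoidDelta A, h₁, h₂, h₃]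
  omega

theorem delta_swap_add_of_gap_block_right {A : Set G.V}
    (hW : G.IsolatedFrom {u | a ≤ τ u ∧ τ u < b} A) (hB : ∀ u, b ≤ τ u → τ u < c → u ∈ A)
    (hab : a ≤ b) {v : G.V} (hv₁ : b ≤ τ v) (hv₂ : τ v < c) :
    G.delta {u | (swapMap a b c ∘ τ) u ≤ (swapMap a b c ∘ τ) v} + G.avoidDelta A {u | τ u < b} =
      G.delta {u | τ u ≤ τ v} + G.avoidDelta A {u | τ u < a} := by
  have hB' : ∀ y ∉ A, ¬ (b ≤ τ y ∧ τ y < c) := fun y hy h => hy (hB y h.1 h.2)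
  have h₁ : G.touchDelta A {u | (swapMap a b c ∘ τ) u ≤ (swapMap a b c ∘ τ) v} =
      G.touchDelta A {u | τ u ≤ τ v} := touchDelta_congr hW fun y hy => by
    simp only [Set.mem_ofPred_eq, Function.comp_apply, swapMap] at hy ⊢
    split_ifs <;> omega
  have h₂ : G.avoidDelta A {u | (swapMap a b c ∘ τ) u ≤ (swapMap a b c ∘ τ) v} =
      G.avoidDelta A {u | τ u < a} := avoidDelta_congr fun y hy => by
    have := hB' y hy
    simp only [Set.mem_ofPred_eq, Function.comp_apply, swapMap]
    split_ifs <;> omega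
  have h₃ : G.avoidDelta A {u | τ u ≤ τ v} = G.avoidDelta A {u | τ u < b} :=
    avoidDelta_congr fun y hy => by
      have := hB' y hy
      simp only [Set.mem_ofPred_eq]
      omega
  rw [delta_eq_touchDelta_add_avoidDelta A, delta_eq_touchDelta_add_avoidDelta A, h₁, h₂, h₃]
  omega

/-- Moving the run `[b, c)` in front of the block `[a, b)` of `A` would lower the sum of the
prefix cuts; this bounds the part of the cut avoiding `A`. -/
theorem IsMinimal.avoidDelta_le_of_block_gap {A : Set G.V} (hτ : G.IsMinimal σ τ) (hab : a < b)
    (hbc : b ≤ c) (hc : c ≤ Nat.card G.V) (hB : ∀ u, a ≤ τ u → τ u < b → u ∈ A)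
    (hW : G.IsolatedFrom {u | b ≤ τ u ∧ τ u < c} A)
    (htouch : G.touchDelta A {u | τ u < a} ≤ G.touchDelta A {u | τ u < b}) :
    G.avoidDelta A {u | τ u < b} ≤ G.avoidDelta A {u | τ u < c} := by
  by_contra! hlt
  have hleft (v : G.V) (hv₁ : a ≤ τ v) (hv₂ : τ v < b) :=
    delta_swap_add_of_block_gap_left hB hW hbc hv₁ hv₂
  have hdom : G.Dominates (swapMap a b c ∘ τ) τ := dominates_swap hab.le hbc
    (fun v hv₁ hv₂ => by have := hleft v hv₁ hv₂; omega)
    fun v hv₁ hv₂ => by have := delta_swap_add_of_block_gap_right hB hW hab.le hv₁ hv₂; omega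
  obtain ⟨v, hv⟩ := hτ.1.exists_eq (hab.trans_le (hbc.trans hc))
  refine (hτ.cutSum_le (hτ.1.swap hab.le hbc hc) hdom).not_gt (hdom.cutSum_lt (v := v) ?_)
  have := hleft v hv.ge (hv ▸ hab)
  omega

/-- Moving the block `[b, c)` of `A` in front of the run `[a, b)` outside `A` removes inversions
with respect to `σ`, as `A` comes first in `σ`; so it has to increase some prefix cut. -/
theorem IsMinimal.touchDelta_lt_of_gap_block {A : Set G.V} (hτ : G.IsMinimal σ τ)
    (hA : ∀ u ∈ A, ∀ w ∉ A, σ u < σ w) (hab : a < b) (hbc : b < c) (hc : c ≤ Nat.card G.V)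
    (hWA : ∀ u, a ≤ τ u → τ u < b → u ∉ A) (hW : G.IsolatedFrom {u | a ≤ τ u ∧ τ u < b} A)
    (hB : ∀ u, b ≤ τ u → τ u < c → u ∈ A)
    (havoid : G.avoidDelta A {u | τ u < a} ≤ G.avoidDelta A {u | τ u < b}) :
    G.touchDelta A {u | τ u < a} < G.touchDelta A {u | τ u < c} := by
  by_contra! hle
  have hdom : G.Dominates (swapMap a b c ∘ τ) τ := dominates_swap hab.le hbc.le
    (fun v hv₁ hv₂ => by have := delta_swap_add_of_gap_block_left hW hB hbc.le hv₁ hv₂; omega)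
    fun v hv₁ hv₂ => by have := delta_swap_add_of_gap_block_right hW hB hab.le hv₁ hv₂; omega
  exact (hτ.inversions_le (hτ.1.swap hab.le hbc.le hc) hdom).not_gt
    (inversions_swap_lt hτ.1 hab hbc hc fun x y hx₁ hx₂ hy₁ hy₂ =>
      hA y (hB y hy₁ hy₂) x (hWA x hx₁ hx₂))

end Swap

theorem IsMinimal.touchDelta_lt_of_block_gap_block {σ τ : G.V → ℕ} {A : Set G.V} {a b c d : ℕ}
    (hτ : G.IsMinimal σ τ) (hA : ∀ u ∈ A, ∀ w ∉ A, σ u < σ w) (hab : a < b) (hbc : b < c)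
    (hcd : c < d) (hd : d ≤ Nat.card G.V) (hB₁ : ∀ u, a ≤ τ u → τ u < b → u ∈ A)
    (hWA : ∀ u, b ≤ τ u → τ u < c → u ∉ A) (hW : G.IsolatedFrom {u | b ≤ τ u ∧ τ u < c} A)
    (hB₂ : ∀ u, c ≤ τ u → τ u < d → u ∈ A)
    (h : G.touchDelta A {u | τ u < a} ≤ G.touchDelta A {u | τ u < b}) :
    G.touchDelta A {u | τ u < b} < G.touchDelta A {u | τ u < d} :=
  hτ.touchDelta_lt_of_gap_block hA hbc hcd hd hWA hW hB₂
    (hτ.avoidDelta_le_of_block_gap hab hbc.le (hcd.le.trans hd) hB₁ hW h)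

theorem blockCount_eq_ncard_isRunStart {τ : G.V → ℕ} (hτ : G.IsContiguous τ) (A : Set G.V) :
    G.blockCount τ A = {i | IsRunStart (fun i => ∃ v ∈ A, τ v = i) i}.ncard := by
  have hpos : ∀ v, (∃ w ∈ A, τ w = τ v) ↔ v ∈ A :=
    fun v => ⟨fun ⟨w, hw, h⟩ => hτ.1 h ▸ hw, fun h => ⟨v, h, rfl⟩⟩
  rw [blockCount, ← Set.ncard_preimage_of_injective_subset_range hτ.1 fun i hi => by
    obtain ⟨⟨v, -, hv⟩, -⟩ := hi
    exact ⟨v, hv⟩]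
  congr 1
  ext v
  simp only [Set.mem_ofPred_eq, Set.mem_preimage, IsRunStart, hpos]
  refine and_congr_right fun _ => ⟨fun h => ?_, fun h u hu => ?_⟩
  · refine (Nat.eq_zero_or_pos (τ v)).imp id fun hpos' ⟨w, hw, hwv⟩ => ?_
    obtain ⟨x, hx, h₁, h₂⟩ := h w (by omega)
    exact hx (hτ.1 (show τ x = τ w by omega) ▸ hw)
  · have hv : ¬ ∃ w ∈ A, τ w = τ v - 1 := h.resolve_left (by omega)
    obtain ⟨w, hw⟩ := hτ.exists_eq (i := τ v - 1) (by have := hτ.2 v; omega)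
    exact ⟨w, fun hwA => hv ⟨w, hwA, hw⟩, by omega, by omega⟩

theorem IsMinimal.blockCount_lt {σ τ : G.V → ℕ} {A : Set G.V} (hτ : G.IsMinimal σ τ)
    (hA : ∀ u ∈ A, ∀ w ∉ A, σ u < σ w) :
    G.blockCount τ A < (G.delta A + 1) * (2 * G.cwOrd τ + 3) := by
  have hpA : ∀ u, (∃ v ∈ A, τ v = τ u) ↔ u ∈ A :=
    fun u => ⟨fun ⟨v, hv, h⟩ => hτ.1.1 h ▸ hv, fun h => ⟨u, h, rfl⟩⟩
  obtain ⟨a, b, hmono, hblock, hgap⟩ := exists_runs (p := fun i => ∃ v ∈ A, τ v = i)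
    (n := Nat.card G.V) (fun i ⟨v, _, hv⟩ => hv ▸ hτ.1.2 v) rfl
  rw [blockCount_eq_ncard_isRunStart hτ.1]
  set m := {i | IsRunStart (fun i => ∃ v ∈ A, τ v = i) i}.ncard
  have hinA : ∀ t < m, ∀ u, a t ≤ τ u → τ u < b t → u ∈ A :=
    fun t ht u h₁ h₂ => (hpA u).1 ((hblock t ht).2.2 _ h₁ h₂)
  have hnotA : ∀ t, t + 1 < m → ∀ u, b t ≤ τ u → τ u < a (t + 1) → u ∉ A :=
    fun t ht u h₁ h₂ hu => (hgap t ht).2 _ h₁ h₂ ((hpA u).2 hu)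
  set T := {t | t + 1 < m ∧ ¬ G.IsolatedFrom {u | b t ≤ τ u ∧ τ u < a (t + 1)} A}
  have hT : T.ncard ≤ G.delta A := by
    refine ncard_le_delta_of_pairwiseDisjoint (fun t ht t' ht' hne => ?_)
      (fun t ht => Set.disjoint_left.2 fun u hu => hnotA t ht.1 u hu.1 hu.2) fun t ht => ht.2
    have hsep : ∀ s s', s < s' → s' + 1 < m → a (s + 1) ≤ b s' := fun s s' hss' hs' =>
      (hmono _ _ hss' (by omega)).trans (hblock s' (by omega)).1.le
    refine Set.disjoint_left.2 fun u hu hu' => ?_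
    simp only [Set.mem_ofPred_eq] at hu hu'
    rcases Nat.lt_or_gt_of_ne hne with h | h
    · have := hsep t t' h ht'.1
      omega
    · have := hsep t' t h ht.1
      omega
  refine (lt_mul_of_ascent (T := T) (f := fun t => G.touchDelta A {u | τ u < b t})
    ((Set.finite_Iio m).subset fun t ht => by simp only [Set.mem_Iio]; have := ht.1; omega)
    (fun t _ => (G.touchDelta_le_delta A _).trans (G.delta_setOf_lt_le_cwOrd τ _))
    fun t ht ht₀ ht₁ hle => ?_).trans_le (Nat.mul_le_mul_right _ (by omega))
  have hiso (s : ℕ) (hs : s + 1 < m) (hsT : s ∉ T) :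
      G.IsolatedFrom {u | b s ≤ τ u ∧ τ u < a (s + 1)} A := by
    by_contra h
    exact hsT ⟨hs, h⟩
  have hgap₀ : G.touchDelta A {u | τ u < b t} = G.touchDelta A {u | τ u < a (t + 1)} :=
    touchDelta_congr (hiso t (by omega) ht₀) fun y hy => by
      simp only [Set.mem_ofPred_eq] at hy ⊢
      have := (hgap t (by omega)).1
      omega
  exact hτ.touchDelta_lt_of_block_gap_block hA (hblock (t + 1) (by omega)).1
    (hgap (t + 1) (by omega)).1 (hblock (t + 2) ht).1 (hblock (t + 2) ht).2.1
    (hinA (t + 1) (by omega)) (hnotA (t + 1) (by omega)) (hiso (t + 1) (by omega) ht₁)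
    (hinA (t + 2) ht) (hgap₀ ▸ hle)

end Multigraph

open Multigraph in
/-- given an ordering `σ` of width `r`, there is an optimum-width
ordering `τ` in which every prefix of `σ` has at most `2r·cw(G) + cw(G) + 4r + 2` blocks. -/
theorem optimum_ordering_few_blocks_for_all_prefixes
    (G : Multigraph) (σ : G.V → ℕ) (hσ : Function.Injective σ) (r : ℕ)
    (hr : G.cwOrd σ = r) :
    ∃ τ : G.V → ℕ, Function.Injective τ ∧ G.cwOrd τ = G.cutwidth ∧
      ∀ v : G.V, G.blockCount τ {u | σ u ≤ σ v} ≤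
        2 * r * G.cutwidth + G.cutwidth + 4 * r + 2 := by
  obtain ⟨τ, hτ, hw⟩ := G.exists_isMinimal σ
  refine ⟨τ, hτ.1.1, hw, fun v => ?_⟩
  have hblocks := hτ.blockCount_lt (A := {u | σ u ≤ σ v}) fun u hu w hw => by
    simp only [Set.mem_ofPred_eq, not_le] at hu hw
    omega
  have hcut : G.delta {u | σ u ≤ σ v} ≤ r := hr ▸ G.delta_le_cwOrd σ v
  have hcw : G.cutwidth ≤ r := hr ▸ G.cutwidth_le_cwOrd hσ
  rw [hw] at hblocks
  have := Nat.mul_le_mul_right (2 * G.cutwidth + 3) (Nat.succ_le_succ hcut)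
  nlinarith
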